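/- The number of edges added by Algorithm Square in steps SQ4 and SQ5 while handling covered requests is at most 14·|opt|; in particular, Σ_{i : r_i covered} ρ(i) ≤ |opt|. -/

import Mathlib

open Finset

/-- A replica is a pair `(v, t)` of a network node and a time. -/
abbrev Replica : Type := ℕ × ℕ

/-- A (directed) grid edge is a pair of replicas. -/
abbrev GEdge : Type := Replica × Replica

/-- Horizontal directed edge `((v,t),(v+1,t))`. -/
def isHoriz (e : GEdge) : Prop := e.2 = (e.1.1 + 1, e.1.2)

/-- Vertical arc `((v,t),(v,t+1))`. -/
def isArc (e : GEdge) : Prop := e.2 = (e.1.1, e.1.2 + 1)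

def isGridEdge (e : GEdge) : Prop := isHoriz e ∨ isArc e

/-- The quarter ball `B(r,ρ)`: replicas `(u,s)` with `u ≤ v`, `s ≤ t` and
`(v−u)+(t−s) ≤ ρ`. -/
def qball (r : Replica) (ρ : ℕ) : Set Replica :=
  {q | q.1 ≤ r.1 ∧ q.2 ≤ r.2 ∧ (r.1 - q.1) + (r.2 - q.2) ≤ ρ}

/-- Grid edges with both endpoints in the quarter ball `B(r,ρ)`. -/
def ballEdge (r : Replica) (ρ : ℕ) (e : GEdge) : Prop :=
  isGridEdge e ∧ e.1 ∈ qball r ρ ∧ e.2 ∈ qball r ρ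

/-- Two quarter balls are edge-disjoint if they share no grid edge. -/
def BallsEdgeDisjoint (r : Replica) (ρ : ℕ) (r' : Replica) (ρ' : ℕ) : Prop :=
  ∀ e : GEdge, ¬ (ballEdge r ρ e ∧ ballEdge r' ρ' e)

/-- The square `Sq(r,ρ) = [v−ρ,v] × [t−ρ,t]`. -/
def SqRect (r : Replica) (ρ : ℕ) : Set Replica :=
  {q | r.1 - ρ ≤ q.1 ∧ q.1 ≤ r.1 ∧ r.2 - ρ ≤ q.2 ∧ q.2 ≤ r.2}

/-- Directed `L∞` distance `d∞(q,r)`: `max(v−u, t−s)` if `u ≤ v` and `s ≤ t`,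
and `∞` otherwise. -/
def distInf (q r : Replica) : ℕ∞ :=
  if q.1 ≤ r.1 ∧ q.2 ≤ r.2 then ((max (r.1 - q.1) (r.2 - q.2) : ℕ) : ℕ∞) else ⊤

/-- The replicas of an edge set: `(0,0)` together with all endpoints of its edges. -/
def Repl (F : Finset GEdge) : Set Replica :=
  insert ((0, 0) : Replica) {q | ∃ e ∈ F, q = e.1 ∨ q = e.2}

/-- The arcs of the vertical path at node `u` from time `s` to time `τ`. -/
def vertPath (u s τ : ℕ) : Finset GEdge :=
  (Finset.range (τ - s)).image (fun k => ((u, s + k), (u, s + k + 1)))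

/-- The horizontal edges of the path at time `τ` from node `u` to node `w`. -/
def horizPath (τ u w : ℕ) : Finset GEdge :=
  (Finset.range (w - u)).image (fun k => ((u + k, τ), (u + k + 1, τ)))

/-- A directed path from `a` to `b` all of whose edges belong to `F`. -/
def PathIn (F : Finset GEdge) (a b : Replica) : Prop :=
  ∃ (L : ℕ) (f : ℕ → Replica), f 0 = a ∧ f L = b ∧ ∀ k < L, (f k, f (k + 1)) ∈ F

/-- An execution of Algorithm `Square` on a request sequence
`r_1 = (v 1, t 1), …, r_N = (v N, t N)` (with `t 0 = 0` and nondecreasing times).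
`sol i` is the edge set after handling request `i`; `ρ i` is the radius of
request `i`; `(u' i, s' i)` is its closest replica and `(us i, ss i)` its
serving replica.  The fields record the specification SQ1–SQ5. -/
structure SquareRun where
  N : ℕ
  v : ℕ → ℕ
  t : ℕ → ℕ
  ρ : ℕ → ℕ
  u' : ℕ → ℕ
  s' : ℕ → ℕ
  us : ℕ → ℕ
  ss : ℕ → ℕ
  sol : ℕ → Finset GEdge
  t_zero : t 0 = 0
  t_mono : ∀ i j, i ≤ j → j ≤ N → t i ≤ t j
  sol_zero : sol 0 = ∅
  /-- SQ2: `ρ i` is a lower bound on the distance from every replica of the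
  current solution (after the SQ1 additions) to `r_i`. -/
  rho_min : ∀ i, 1 ≤ i → i ≤ N →
    ∀ q ∈ Repl (sol (i - 1) ∪ vertPath 0 (t (i - 1)) (t i)),
      (ρ i : ℕ∞) ≤ distInf q (v i, t i)
  /-- SQ2: the closest replica belongs to the current solution. -/
  closest_mem : ∀ i, 1 ≤ i → i ≤ N →
    (u' i, s' i) ∈ Repl (sol (i - 1) ∪ vertPath 0 (t (i - 1)) (t i))
  /-- SQ2: the closest replica attains the radius. -/
  closest_dist : ∀ i, 1 ≤ i → i ≤ N →
    distInf (u' i, s' i) (v i, t i) = (ρ i : ℕ∞)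
  /-- SQ2: among replicas of node `u' i`, the closest replica is the latest. -/
  closest_late : ∀ i, 1 ≤ i → i ≤ N → ∀ s, s ≤ t i →
    (u' i, s) ∈ Repl (sol (i - 1) ∪ vertPath 0 (t (i - 1)) (t i)) → s ≤ s' i
  /-- SQ3: the serving replica is in the current solution and in `Sq(r_i, 5ρ i)`. -/
  serv_mem : ∀ i, 1 ≤ i → i ≤ N →
    (us i, ss i) ∈ Repl (sol (i - 1) ∪ vertPath 0 (t (i - 1)) (t i)) ∧
      (us i, ss i) ∈ SqRect (v i, t i) (5 * ρ i)
  /-- SQ3: the serving node is leftmost. -/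
  serv_min : ∀ i, 1 ≤ i → i ≤ N →
    ∀ q ∈ Repl (sol (i - 1) ∪ vertPath 0 (t (i - 1)) (t i)),
      q ∈ SqRect (v i, t i) (5 * ρ i) → us i ≤ q.1
  /-- SQ3: among those, the serving time is latest. -/
  serv_late : ∀ i, 1 ≤ i → i ≤ N →
    ∀ q ∈ Repl (sol (i - 1) ∪ vertPath 0 (t (i - 1)) (t i)),
      q ∈ SqRect (v i, t i) (5 * ρ i) → q.1 = us i → q.2 ≤ ss i
  /-- SQ1 + SQ4 + SQ5: the edges added while handling request `i`. -/
  step : ∀ i, 1 ≤ i → i ≤ N →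
    sol i = (sol (i - 1) ∪ vertPath 0 (t (i - 1)) (t i))
      ∪ vertPath (us i) (ss i) (t i) ∪ horizPath (t i) (us i) (v i)
      ∪ vertPath (us i) (t i) (t i + 4 * ρ i)

namespace SquareRun

variable (S : SquareRun)

/-- The `i`-th request replica. -/
def req (i : ℕ) : Replica := (S.v i, S.t i)

/-- The edges added in steps SQ4 and SQ5 while handling request `i`. -/
def added45 (i : ℕ) : Finset GEdge :=
  vertPath (S.us i) (S.ss i) (S.t i) ∪ horizPath (S.t i) (S.us i) (S.v i)
    ∪ vertPath (S.us i) (S.t i) (S.t i + 4 * S.ρ i)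

/-- Request `i` is covered if `v_i − u^s_i ≥ ρ(i)`. -/
def covered (i : ℕ) : Prop := S.ρ i ≤ S.v i - S.us i

def uncovered (i : ℕ) : Prop := ¬ S.covered i

/-- A feasible solution of the DMCD instance given by the requests of `S`. -/
def Feasible (F : Finset GEdge) : Prop :=
  (∀ e ∈ F, isGridEdge e) ∧
  (∀ i, 1 ≤ i → i ≤ S.N → PathIn F (0, 0) (S.req i)) ∧
  (∀ τ, τ < S.t S.N → ∃ w, ((w, τ), (w, τ + 1)) ∈ F)

/-- `S.IsParent i j` means `parent(j) = i`:  `i` is the least index greater than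
`j` such that `r_i` is uncovered and `SQball(j)`, `SQball(i)` are not
edge-disjoint. -/
def IsParent (i j : ℕ) : Prop :=
  1 ≤ j ∧ j < i ∧ i ≤ S.N ∧ S.uncovered j ∧ S.uncovered i ∧
    ¬ BallsEdgeDisjoint (S.req j) (S.ρ j) (S.req i) (S.ρ i) ∧
    ∀ k, j < k → k < i → S.uncovered k →
      BallsEdgeDisjoint (S.req j) (S.ρ j) (S.req k) (S.ρ k)

/-- A root: an uncovered request with no parent. -/
def IsRoot (i : ℕ) : Prop :=
  1 ≤ i ∧ i ≤ S.N ∧ S.uncovered i ∧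
    ∀ j, i < j → j ≤ S.N → S.uncovered j →
      BallsEdgeDisjoint (S.req i) (S.ρ i) (S.req j) (S.ρ j)

/-- `i ∈ Tree(iStar)`: one can go from `i` to `iStar` by repeatedly passing from
a child to its parent. -/
def InTree (i iStar : ℕ) : Prop :=
  Relation.ReflTransGen (fun a b => S.IsParent b a) i iStar

end SquareRun

/-!
Serving a covered request `r_i` lays a horizontal segment of length at least `ρ(i)` ending at
`r_i`. Every later request `r_j` keeps distance at least `ρ(j)` from that segment, which
forces `SQball(i)` and `SQball(j)` to be edge-disjoint. A feasible solution contains a grid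
path to each `r_i`, whose last `ρ(i)` edges lie in `SQball(i)`; summing over the covered
requests gives `Σ ρ(i) ≤ |opt|`. Since the serving replica lies in `Sq(r_i, 5ρ(i))`, steps
SQ4–SQ5 add at most `5ρ(i) + 5ρ(i) + 4ρ(i)` edges for request `i`.
-/

lemma Repl_mono {F G : Finset GEdge} (h : F ⊆ G) : Repl F ⊆ Repl G := by
  rintro q (rfl | ⟨e, he, hq⟩)
  · exact Set.mem_insert _ _
  · exact Or.inr ⟨e, h he, hq⟩

lemma mem_Repl_of_horizPath_subset {F : Finset GEdge} {τ u x w : ℕ}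
    (hF : horizPath τ u x ⊆ F) (hux : u < x) (huw : u ≤ w) (hwx : w ≤ x) :
    ((w, τ) : Replica) ∈ Repl F := by
  rcases hwx.lt_or_eq with hwx | rfl
  · refine Or.inr ⟨((w, τ), (w + 1, τ)), hF ?_, Or.inl rfl⟩
    exact mem_image.mpr
      ⟨w - u, mem_range.mpr (by omega), by simp only [Nat.add_sub_cancel' huw]⟩
  · refine Or.inr ⟨((w - 1, τ), (w, τ)), hF ?_, Or.inr rfl⟩
    refine mem_image.mpr ⟨w - 1 - u, mem_range.mpr (by omega), ?_⟩
    simp only [Prod.mk.injEq, and_true]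
    omega

lemma card_vertPath_le (u s τ : ℕ) : #(vertPath u s τ) ≤ τ - s :=
  card_image_le.trans (card_range _).le

lemma card_horizPath_le (τ u w : ℕ) : #(horizPath τ u w) ≤ w - u :=
  card_image_le.trans (card_range _).le

lemma isGridEdge.fst_le_snd {e : GEdge} (h : isGridEdge e) : e.1 ≤ e.2 := by
  rcases h with h | h <;> rw [Prod.le_def, h] <;> dsimp only <;> omega

lemma isGridEdge.coord_sum_snd {e : GEdge} (h : isGridEdge e) :
    e.2.1 + e.2.2 = e.1.1 + e.1.2 + 1 := by
  rcases h with h | h <;> rw [h] <;> omega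

lemma ballEdge.snd_dist_lt {r : Replica} {ρ : ℕ} {e : GEdge} (h : ballEdge r ρ e) :
    e.2.1 ≤ r.1 ∧ e.2.2 ≤ r.2 ∧ (r.1 - e.2.1) + (r.2 - e.2.2) < ρ := by
  obtain ⟨hge, ⟨-, -, h1⟩, ⟨h2u, h2s, -⟩⟩ := h
  have := hge.coord_sum_snd
  exact ⟨h2u, h2s, by omega⟩

lemma grid_path_coord_sum {F : Finset GEdge} (hF : ∀ e ∈ F, isGridEdge e) {L : ℕ}
    {f : ℕ → Replica} (hf : ∀ k < L, (f k, f (k + 1)) ∈ F) {k : ℕ} (hk : k ≤ L) :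
    (f k).1 + (f k).2 = (f 0).1 + (f 0).2 + k := by
  induction k with
  | zero => rfl
  | succ k ih =>
    have := (hF _ (hf k hk)).coord_sum_snd
    have := ih (by omega)
    dsimp only at *
    omega

lemma grid_path_mono {F : Finset GEdge} (hF : ∀ e ∈ F, isGridEdge e) {L : ℕ}
    {f : ℕ → Replica} (hf : ∀ k < L, (f k, f (k + 1)) ∈ F) {k l : ℕ} (hkl : k ≤ l)
    (hl : l ≤ L) : f k ≤ f l := by
  induction l, hkl using Nat.le_induction with
  | base => exact le_rfl
  | succ l _ ih => exact (ih (by omega)).trans (hF _ (hf l (by omega))).fst_le_snd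

open scoped Classical in
/-- The last `ρ` edges of the path are distinct because the coordinate sum increases along it. -/
lemma le_card_ballEdge_of_pathIn {F : Finset GEdge} (hF : ∀ e ∈ F, isGridEdge e)
    {r : Replica} {ρ : ℕ} (hpath : PathIn F (0, 0) r) (hρ : ρ ≤ r.1 + r.2) :
    ρ ≤ #(F.filter (ballEdge r ρ)) := by
  obtain ⟨L, f, hf0, hfL, hf⟩ := hpath
  have hsum : ∀ k ≤ L, (f k).1 + (f k).2 = k := fun k hk => by
    simpa [hf0] using grid_path_coord_sum hF hf hk
  have hL : L = r.1 + r.2 := by rw [← hsum L le_rfl, hfL]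
  have hball : ∀ m, L - ρ ≤ m → m ≤ L → f m ∈ qball r ρ := fun m hm hmL => by
    have hle := Prod.le_def.mp (hfL ▸ grid_path_mono hF hf hmL le_rfl)
    have := hsum m hmL
    exact ⟨hle.1, hle.2, by omega⟩
  have hinj : Set.InjOn (fun k => (f (L - ρ + k), f (L - ρ + k + 1))) (range ρ) := by
    intro a ha b hb hab
    have ha' := hsum (L - ρ + a) (by have := mem_range.mp ha; omega)
    have hb' := hsum (L - ρ + b) (by have := mem_range.mp hb; omega)
    rw [(Prod.mk.inj hab).1] at ha'
    omega
  calc ρ = #(range ρ) := (card_range ρ).symm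
    _ ≤ #(F.filter (ballEdge r ρ)) := by
      refine card_le_card_of_injOn _ (fun k hk => ?_) hinj
      have hk : k < ρ := mem_range.mp hk
      have he := hf (L - ρ + k) (by omega)
      exact mem_filter.mpr ⟨he, hF _ he, hball _ (by omega) (by omega),
        hball _ (by omega) (by omega)⟩

namespace SquareRun

variable (S : SquareRun)

/-- The edge set from which request `i` is served: `Square(i-1)` together with the SQ1 arcs. -/
def current (i : ℕ) : Finset GEdge := S.sol (i - 1) ∪ vertPath 0 (S.t (i - 1)) (S.t i)

lemma sol_pred_subset {i : ℕ} (h1 : 1 ≤ i) (hN : i ≤ S.N) : S.sol (i - 1) ⊆ S.sol i := by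
  rw [S.step i h1 hN]
  exact subset_union_left.trans (subset_union_left.trans (subset_union_left.trans
    subset_union_left))

lemma sol_mono {i j : ℕ} (hij : i ≤ j) (hj : j ≤ S.N) : S.sol i ⊆ S.sol j := by
  induction j, hij using Nat.le_induction with
  | base => exact subset_rfl
  | succ j _ ih => exact (ih (by omega)).trans (S.sol_pred_subset (by omega) hj)

lemma horizPath_subset_sol {i : ℕ} (h1 : 1 ≤ i) (hN : i ≤ S.N) :
    horizPath (S.t i) (S.us i) (S.v i) ⊆ S.sol i := by
  rw [S.step i h1 hN]
  exact subset_union_right.trans subset_union_left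

lemma rho_le_of_mem_current {j : ℕ} (h1 : 1 ≤ j) (hN : j ≤ S.N) {q : Replica}
    (hq : q ∈ Repl (S.current j)) (hu : q.1 ≤ S.v j) (hs : q.2 ≤ S.t j) :
    S.ρ j ≤ max (S.v j - q.1) (S.t j - q.2) := by
  have h := S.rho_min j h1 hN q hq
  rw [distInf, if_pos ⟨hu, hs⟩] at h
  exact_mod_cast h

lemma rho_le_coord_sum {i : ℕ} (h1 : 1 ≤ i) (hN : i ≤ S.N) : S.ρ i ≤ S.v i + S.t i := by
  have := S.rho_le_of_mem_current h1 hN (Set.mem_insert _ _) (Nat.zero_le _) (Nat.zero_le _)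
  omega

/-- The witness is the replica `(min v_j v_i, t_i)` of the segment of request `i`: a common
edge of the two balls puts it within distance `< ρ(j)` of `r_j`. -/
lemma ballsEdgeDisjoint_of_covered {i j : ℕ} (h1 : 1 ≤ i) (hij : i < j) (hN : j ≤ S.N)
    (hcov : S.covered i) : BallsEdgeDisjoint (S.req i) (S.ρ i) (S.req j) (S.ρ j) := by
  rintro e ⟨hei, hej⟩
  obtain ⟨hiu, his, hid⟩ := hei.snd_dist_lt
  obtain ⟨hju, hjs, hjd⟩ := hej.snd_dist_lt
  simp only [req] at hiu his hid hju hjs hjd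
  have hcov : S.ρ i ≤ S.v i - S.us i := hcov
  have hsub : S.sol i ⊆ S.current j :=
    (S.sol_mono (Nat.le_sub_one_of_lt hij) (by omega)).trans subset_union_left
  have hq : ((min (S.v j) (S.v i), S.t i) : Replica) ∈ Repl (S.current j) :=
    Repl_mono hsub (mem_Repl_of_horizPath_subset (S.horizPath_subset_sol h1 (by omega))
      (by omega) (by omega) (min_le_right _ _))
  have := S.rho_le_of_mem_current (by omega) hN hq (min_le_left _ _)
    (S.t_mono i j hij.le hN)
  omega

open scoped Classical in
lemma pairwiseDisjoint_ballEdge_covered (F : Finset GEdge) :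
    (((Icc 1 S.N).filter S.covered : Finset ℕ) : Set ℕ).PairwiseDisjoint
      fun i => F.filter (ballEdge (S.req i) (S.ρ i)) := by
  have hC : ∀ i ∈ (Icc 1 S.N).filter S.covered, 1 ≤ i ∧ i ≤ S.N ∧ S.covered i := by
    simp only [mem_filter, mem_Icc, and_assoc, imp_self, implies_true]
  intro i hi j hj hne
  obtain ⟨hi1, hiN, hicov⟩ := hC i hi
  obtain ⟨hj1, hjN, hjcov⟩ := hC j hj
  rcases Nat.lt_or_gt_of_ne hne with h | h
  · exact disjoint_filter.mpr fun e _ hei hej =>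
      S.ballsEdgeDisjoint_of_covered hi1 h hjN hicov e ⟨hei, hej⟩
  · exact disjoint_filter.mpr fun e _ hei hej =>
      S.ballsEdgeDisjoint_of_covered hj1 h hiN hjcov e ⟨hej, hei⟩

lemma card_added45_le {i : ℕ} (h1 : 1 ≤ i) (hN : i ≤ S.N) :
    #(S.added45 i) ≤ 14 * S.ρ i := by
  obtain ⟨-, ⟨hu, -, hs, -⟩⟩ := S.serv_mem i h1 hN
  refine (card_union_le _ _).trans ((Nat.add_le_add_right (card_union_le _ _) _).trans ?_)
  have := card_vertPath_le (S.us i) (S.ss i) (S.t i)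
  have := card_horizPath_le (S.t i) (S.us i) (S.v i)
  have := card_vertPath_le (S.us i) (S.t i) (S.t i + 4 * S.ρ i)
  simp only at hu hs
  omega

end SquareRun

open scoped Classical in
/-- The number of edges added by Square in steps SQ4–SQ5 while handling covered
requests is at most `14·|opt|`; in particular the sum of the radii of the
covered requests is at most `|opt|`. -/
theorem covered_cost_le (S : SquareRun) :
    ∀ F : Finset GEdge, S.Feasible F →
      (((Finset.Icc 1 S.N).filter S.covered).biUnion S.added45).card ≤
          14 * F.card ∧
        ∑ i ∈ (Finset.Icc 1 S.N).filter S.covered, S.ρ i ≤ F.card := by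
  rintro F ⟨hgrid, hpath, -⟩
  set C := (Finset.Icc 1 S.N).filter S.covered
  have hC : ∀ i ∈ C, 1 ≤ i ∧ i ≤ S.N := fun i hi => mem_Icc.mp (mem_filter.mp hi).1
  let ballEdges (i : ℕ) := F.filter (ballEdge (S.req i) (S.ρ i))
  have hsum : ∑ i ∈ C, S.ρ i ≤ #F :=
    calc ∑ i ∈ C, S.ρ i ≤ ∑ i ∈ C, #(ballEdges i) := sum_le_sum fun i hi =>
          le_card_ballEdge_of_pathIn hgrid (hpath i (hC i hi).1 (hC i hi).2)
            (S.rho_le_coord_sum (hC i hi).1 (hC i hi).2)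
      _ = #(C.biUnion ballEdges) := (card_biUnion (S.pairwiseDisjoint_ballEdge_covered F)).symm
      _ ≤ #F := card_le_card (biUnion_subset.mpr fun _ _ => filter_subset _ _)
  refine ⟨?_, hsum⟩
  calc #(C.biUnion S.added45) ≤ ∑ i ∈ C, #(S.added45 i) := card_biUnion_le
    _ ≤ ∑ i ∈ C, 14 * S.ρ i :=
      sum_le_sum fun i hi => S.card_added45_le (hC i hi).1 (hC i hi).2
    _ = 14 * ∑ i ∈ C, S.ρ i := (mul_sum _ _ _).symm
    _ ≤ 14 * #F := Nat.mul_le_mul_left 14 hsum
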